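/- arXiv:1110.4770 — 2 statements merged into one kernel-verified Lean document; each statement's English description precedes it below -/
import Mathlib

section
/- Let φ solve φ'' + ((N-1)/t) φ' + (μ - (N-1)/t²) φ = 0 on (0,1) with φ(0)=0, φ'(1)=0, normalized so that ∫₀¹ φ(t)² t^{N-1} dt = 1/|B|, where μ = μ₂(B) is the corresponding Neumann eigenvalue of the unit ball B ⊂ R^N. Then |B| φ(1)² = 2μ/(μ - N + 1). -/
/-!
Write `n = N - 1`. The weighted Wronskian `W = tⁿ (t φ' - φ)` of `φ` against the solution `t`
of the equation with `μ = 0` satisfies `W' = -μ t^(n+1) φ`, and the Pohozaev-type energy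
`E = W² / t^(n+1) + (n+1) φ W / t + μ t^(n+1) φ²` satisfies `E' = 2μ tⁿ φ²`. Both derivatives
are integrable up to `0`, so `W` and `E` have limits there; as `t^(n+1) E - W² → 0`, the limit
of `W` is `0`, L'Hôpital gives `W / t^(n+1) → 0`, and hence `E → 0`. Integrating `E'` over
`[0, 1]` with `φ'(1) = 0` gives `(μ - n) φ(1)² = 2μ ∫₀¹ φ² tⁿ`.
-/

open MeasureTheory Metric

/-- The first nontrivial Neumann eigenvalue of the unit ball `B ⊂ ℝ^N`, defined via its
variational characterization as the infimum of Rayleigh quotients of mean-zero `H¹` functions. -/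
noncomputable def mu2 (N : ℕ) : ℝ :=
  sInf {R : ℝ | ∃ u : EuclideanSpace ℝ (Fin N) → ℝ,
    DifferentiableOn ℝ u (ball 0 1) ∧
    MemLp u 2 (volume.restrict (ball (0 : EuclideanSpace ℝ (Fin N)) 1)) ∧
    MemLp (fun x => fderiv ℝ u x) 2 (volume.restrict (ball (0 : EuclideanSpace ℝ (Fin N)) 1)) ∧
    (∫ x in ball (0 : EuclideanSpace ℝ (Fin N)) 1, u x) = 0 ∧
    (∫ x in ball (0 : EuclideanSpace ℝ (Fin N)) 1, (u x) ^ 2) ≠ 0 ∧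
    R = (∫ x in ball (0 : EuclideanSpace ℝ (Fin N)) 1, ‖fderiv ℝ u x‖ ^ 2) /
        (∫ x in ball (0 : EuclideanSpace ℝ (Fin N)) 1, (u x) ^ 2)}

open Set Filter Topology

theorem tendsto_nhdsGT_sub_integral_of_hasDerivAt {E : Type*} [NormedAddCommGroup E]
    [NormedSpace ℝ E] [CompleteSpace E] {f f' : ℝ → E} {a b : ℝ} (hab : a < b)
    (hcont : ContinuousOn f (Ioc a b)) (hderiv : ∀ x ∈ Ioo a b, HasDerivAt f (f' x) x)
    (hint : IntervalIntegrable f' volume a b) :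
    Tendsto f (𝓝[>] a) (𝓝 (f b - ∫ x in a..b, f' x)) := by
  have hprim : Tendsto (fun x => ∫ y in x..b, f' y) (𝓝[>] a) (𝓝 (∫ y in a..b, f' y)) := by
    rw [intervalIntegrable_iff_integrableOn_Icc_of_le hab.le, ← uIcc_of_le hab.le] at hint
    refine ((intervalIntegral.continuousOn_primitive_interval_left hint) a
      left_mem_uIcc).tendsto.mono_left (nhdsWithin_le_of_mem ?_)
    rw [uIcc_of_le hab.le]
    exact Icc_mem_nhdsGT hab
  refine (tendsto_const_nhds.sub hprim).congr' ?_
  filter_upwards [Ioo_mem_nhdsGT hab] with x hx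
  rw [intervalIntegral.integral_eq_sub_of_hasDerivAt_of_le hx.2.le
    (hcont.mono (Icc_subset_Ioc_iff hx.2.le |>.2 ⟨hx.1, le_rfl⟩))
    (fun y hy => hderiv y ⟨hx.1.trans hy.1, hy.2⟩)
    (hint.mono_set (uIcc_subset_uIcc (mem_uIcc_of_le hx.1.le hx.2.le) right_mem_uIcc))]
  abel

theorem tendsto_pow_nhdsGT_zero (k : ℕ) :
    Tendsto (fun t : ℝ => t ^ k) (𝓝[>] 0) (𝓝 (0 ^ k)) :=
  ((continuous_pow k).tendsto 0).mono_left nhdsWithin_le_nhds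

theorem hasDerivAt_pow_of_ne_zero (n : ℕ) {t : ℝ} (ht : t ≠ 0) :
    HasDerivAt (· ^ n) (n * t ^ n / t) t := by
  refine (hasDerivAt_pow n t).congr_deriv ?_
  cases n with
  | zero => simp
  | succ k => rw [Nat.add_sub_cancel, pow_succ]; field_simp

/-- `t ^ n` times the Wronskian of `φ` with `t ↦ t`, the solution of the equation for `μ = 0`. -/
def radialWronskian (n : ℕ) (φ φ' : ℝ → ℝ) (t : ℝ) : ℝ :=
  t ^ n * (t * φ' t - φ t)

/-- For `t ≠ 0` this is `t^(n+1) φ'² + (μ t^(n+1) - n t^(n-1)) φ² + (n-1) t^n φ φ'`. -/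
noncomputable def radialEnergy (n : ℕ) (μ : ℝ) (φ φ' : ℝ → ℝ) (t : ℝ) : ℝ :=
  radialWronskian n φ φ' t ^ 2 / t ^ (n + 1) + (n + 1) * φ t * radialWronskian n φ φ' t / t
    + μ * t ^ (n + 1) * φ t ^ 2

theorem hasDerivAt_radialWronskian {n : ℕ} {μ t : ℝ} {φ φ' φ'' : ℝ → ℝ} (ht : t ≠ 0)
    (hφ : HasDerivAt φ (φ' t) t) (hφ' : HasDerivAt φ' (φ'' t) t)
    (hode : φ'' t + n / t * φ' t + (μ - n / t ^ 2) * φ t = 0) :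
    HasDerivAt (radialWronskian n φ φ') (-(μ * t ^ (n + 1) * φ t)) t := by
  have h := (hasDerivAt_pow_of_ne_zero n ht).mul (((hasDerivAt_id' t).mul hφ').sub hφ)
  refine h.congr_deriv ?_
  have hφ'' : φ'' t = -(n / t * φ' t) - (μ - n / t ^ 2) * φ t := by linear_combination hode
  simp only [Pi.mul_apply, Pi.sub_apply, hφ'']
  field_simp
  ring

theorem hasDerivAt_radialEnergy {n : ℕ} {μ t : ℝ} {φ φ' : ℝ → ℝ} (ht : t ≠ 0)
    (hφ : HasDerivAt φ (φ' t) t)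
    (hW : HasDerivAt (radialWronskian n φ φ') (-(μ * t ^ (n + 1) * φ t)) t) :
    HasDerivAt (radialEnergy n μ φ φ') (2 * μ * t ^ n * φ t ^ 2) t := by
  have hp := hasDerivAt_pow (n + 1) t
  have h := (((hW.pow 2).div hp (pow_ne_zero _ ht)).add
    (((hφ.const_mul ((n : ℝ) + 1)).mul hW).div (hasDerivAt_id' t) ht)).add
    ((hp.const_mul μ).mul (hφ.pow 2))
  refine h.congr_deriv ?_
  simp only [Pi.mul_apply, Pi.pow_apply, radialWronskian, Nat.add_sub_cancel]
  push_cast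
  field_simp
  ring

theorem radialEnergy_one {n : ℕ} {μ : ℝ} {φ φ' : ℝ → ℝ} (h1 : φ' 1 = 0) :
    radialEnergy n μ φ φ' 1 = (μ - n) * φ 1 ^ 2 := by
  simp only [radialEnergy, radialWronskian, h1]
  ring

/-- The radial profile equation in dimension `n + 1`. Continuity at the origin with `φ 0 = 0` is
what rules out the second solution, which behaves like `t ^ (-n)` near `0`. -/
structure IsRegularRadialSolution (n : ℕ) (μ : ℝ) (φ φ' φ'' : ℝ → ℝ) : Prop where
  hasDerivAt : ∀ t ∈ Ioc (0 : ℝ) 1, HasDerivAt φ (φ' t) t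
  hasDerivAt_deriv : ∀ t ∈ Ioc (0 : ℝ) 1, HasDerivAt φ' (φ'' t) t
  continuousOn : ContinuousOn φ (Icc 0 1)
  ode : ∀ t ∈ Ioo (0 : ℝ) 1, φ'' t + n / t * φ' t + (μ - n / t ^ 2) * φ t = 0
  apply_zero : φ 0 = 0

namespace IsRegularRadialSolution

variable {n : ℕ} {μ : ℝ} {φ φ' φ'' : ℝ → ℝ}

theorem tendsto_nhdsGT_zero (h : IsRegularRadialSolution n μ φ φ' φ'') :
    Tendsto φ (𝓝[>] 0) (𝓝 0) := by
  simpa only [h.apply_zero] using (h.continuousOn 0 ⟨le_rfl, zero_le_one⟩).tendsto.mono_left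
    (nhdsWithin_le_of_mem (Icc_mem_nhdsGT one_pos))

theorem continuousOn_wronskian (h : IsRegularRadialSolution n μ φ φ' φ'') :
    ContinuousOn (radialWronskian n φ φ') (Ioc 0 1) := by
  have hφ : ContinuousOn φ (Ioc 0 1) := h.continuousOn.mono Ioc_subset_Icc_self
  have hφ' : ContinuousOn φ' (Ioc 0 1) := fun t ht =>
    (h.hasDerivAt_deriv t ht).continuousAt.continuousWithinAt
  unfold radialWronskian
  fun_prop

theorem continuousOn_energy (h : IsRegularRadialSolution n μ φ φ' φ'') :
    ContinuousOn (radialEnergy n μ φ φ') (Ioc 0 1) := by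
  have hφ : ContinuousOn φ (Ioc 0 1) := h.continuousOn.mono Ioc_subset_Icc_self
  have hW := h.continuousOn_wronskian
  have ht : ∀ t ∈ Ioc (0 : ℝ) 1, t ≠ 0 := fun t ht => ht.1.ne'
  have htn : ∀ t ∈ Ioc (0 : ℝ) 1, t ^ (n + 1) ≠ 0 := fun t ht => (pow_pos ht.1 _).ne'
  unfold radialEnergy
  fun_prop (disch := assumption)

theorem hasDerivAt_wronskian (h : IsRegularRadialSolution n μ φ φ' φ'') :
    ∀ t ∈ Ioo (0 : ℝ) 1,
      HasDerivAt (radialWronskian n φ φ') (-(μ * t ^ (n + 1) * φ t)) t := fun t ht =>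
  hasDerivAt_radialWronskian ht.1.ne' (h.hasDerivAt t (Ioo_subset_Ioc_self ht))
    (h.hasDerivAt_deriv t (Ioo_subset_Ioc_self ht)) (h.ode t ht)

theorem hasDerivAt_energy (h : IsRegularRadialSolution n μ φ φ' φ'') :
    ∀ t ∈ Ioo (0 : ℝ) 1, HasDerivAt (radialEnergy n μ φ φ') (2 * μ * t ^ n * φ t ^ 2) t :=
  fun t ht => hasDerivAt_radialEnergy ht.1.ne' (h.hasDerivAt t (Ioo_subset_Ioc_self ht))
    (h.hasDerivAt_wronskian t ht)

theorem tendsto_energy (h : IsRegularRadialSolution n μ φ φ' φ'') :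
    Tendsto (radialEnergy n μ φ φ') (𝓝[>] 0)
      (𝓝 (radialEnergy n μ φ φ' 1 - ∫ t in (0 : ℝ)..1, 2 * μ * t ^ n * φ t ^ 2)) := by
  refine tendsto_nhdsGT_sub_integral_of_hasDerivAt one_pos h.continuousOn_energy
    h.hasDerivAt_energy (ContinuousOn.intervalIntegrable ?_)
  rw [uIcc_of_le zero_le_one]
  have := h.continuousOn
  fun_prop

/-- The Wronskian has a limit `c` at `0`, and `t ^ (n + 1)` times the energy tends to `c²`;
since the energy also has a limit, `c = 0`. -/
theorem tendsto_wronskian_zero (h : IsRegularRadialSolution n μ φ φ' φ'') :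
    Tendsto (radialWronskian n φ φ') (𝓝[>] 0) (𝓝 0) := by
  have hW := tendsto_nhdsGT_sub_integral_of_hasDerivAt one_pos h.continuousOn_wronskian
    h.hasDerivAt_wronskian (ContinuousOn.intervalIntegrable (by
      rw [uIcc_of_le zero_le_one]; have := h.continuousOn; fun_prop))
  set c := radialWronskian n φ φ' 1 - _
  have hφ := h.tendsto_nhdsGT_zero
  have hlhs := (tendsto_pow_nhdsGT_zero (n + 1)).mul h.tendsto_energy
  have hrhs := ((hW.pow 2).add
    ((((tendsto_pow_nhdsGT_zero n).const_mul ((n : ℝ) + 1)).mul hφ).mul hW)).add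
    (((tendsto_pow_nhdsGT_zero (n + 1)).mul hφ).pow 2 |>.const_mul μ)
  have hsq := tendsto_nhds_unique (hrhs.congr' ?_) hlhs
  · simp only [ne_eq, Nat.add_eq_zero_iff, one_ne_zero, and_false, not_false_eq_true,
      zero_pow, mul_zero, zero_mul, add_zero, pow_eq_zero_iff, OfNat.ofNat_ne_zero] at hsq
    rwa [hsq] at hW
  · filter_upwards [self_mem_nhdsWithin] with t (ht : 0 < t)
    simp only [radialEnergy]
    field_simp
    ring

theorem tendsto_wronskian_div_pow (h : IsRegularRadialSolution n μ φ φ' φ'') :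
    Tendsto (fun t => radialWronskian n φ φ' t / t ^ (n + 1)) (𝓝[>] 0) (𝓝 0) := by
  refine HasDerivAt.lhopital_zero_right_on_Ioo one_pos h.hasDerivAt_wronskian
    (fun t _ => hasDerivAt_pow (n + 1) t) (fun t ht => by have := ht.1; positivity)
    h.tendsto_wronskian_zero ?_ ?_
  · simpa using tendsto_pow_nhdsGT_zero (n + 1)
  · have hlim := ((tendsto_nhdsWithin_of_tendsto_nhds tendsto_id).mul
      h.tendsto_nhdsGT_zero).const_mul (-μ / (n + 1))
    rw [mul_zero, mul_zero] at hlim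
    refine hlim.congr' ?_
    filter_upwards [self_mem_nhdsWithin] with t (ht : 0 < t)
    simp only [id, Nat.add_sub_cancel]
    push_cast
    field_simp
    ring

theorem tendsto_energy_zero (h : IsRegularRadialSolution n μ φ φ' φ'') :
    Tendsto (radialEnergy n μ φ φ') (𝓝[>] 0) (𝓝 0) := by
  have hφ := h.tendsto_nhdsGT_zero
  have hr := h.tendsto_wronskian_div_pow
  have hlim := ((hr.mul h.tendsto_wronskian_zero).add
    (((hφ.const_mul ((n : ℝ) + 1)).mul (tendsto_pow_nhdsGT_zero n)).mul hr)).add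
    (((tendsto_pow_nhdsGT_zero (n + 1)).mul (hφ.pow 2)).const_mul μ)
  simp only [mul_zero, zero_mul, add_zero, ne_eq, OfNat.ofNat_ne_zero, not_false_eq_true,
    zero_pow] at hlim
  refine hlim.congr' ?_
  filter_upwards [self_mem_nhdsWithin] with t (ht : 0 < t)
  simp only [radialEnergy]
  field_simp
  ring

theorem sub_mul_sq_one_eq_integral (h : IsRegularRadialSolution n μ φ φ' φ'') (h1 : φ' 1 = 0) :
    (μ - n) * φ 1 ^ 2 = 2 * μ * ∫ t in (0 : ℝ)..1, φ t ^ 2 * t ^ n := by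
  have hE := tendsto_nhds_unique h.tendsto_energy h.tendsto_energy_zero
  rw [sub_eq_zero, radialEnergy_one h1] at hE
  rw [hE, ← intervalIntegral.integral_const_mul]
  congr 1 with t
  ring

end IsRegularRadialSolution

/-- Let `φ` solve `φ'' + ((N-1)/t) φ' + (μ - (N-1)/t²) φ = 0` on `(0,1)` with `φ(0) = 0`,
`φ'(1) = 0`, normalized so that `∫₀¹ φ(t)² t^{N-1} dt = 1/|B|`, where `μ = μ₂(B)` is the first
nontrivial Neumann eigenvalue of the unit ball `B ⊂ ℝ^N`. Then `|B| φ(1)² = 2μ/(μ - N + 1)`. -/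
theorem normalized_eigenprofile_boundary_value (N : ℕ) (hN : 2 ≤ N)
    (φ φ' φ'' : ℝ → ℝ)
    (hd1 : ∀ t ∈ Set.Ioc (0 : ℝ) 1, HasDerivAt φ (φ' t) t)
    (hd2 : ∀ t ∈ Set.Ioc (0 : ℝ) 1, HasDerivAt φ' (φ'' t) t)
    (hcont : ContinuousOn φ (Set.Icc 0 1))
    (hode : ∀ t ∈ Set.Ioo (0 : ℝ) 1,
      φ'' t + ((N : ℝ) - 1) / t * φ' t + (mu2 N - ((N : ℝ) - 1) / t ^ 2) * φ t = 0)
    (h0 : φ 0 = 0) (h1 : φ' 1 = 0)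
    (hnorm : ∫ t in (0 : ℝ)..1, φ t ^ 2 * t ^ (N - 1) =
      1 / (volume (ball (0 : EuclideanSpace ℝ (Fin N)) 1)).toReal) :
    (volume (ball (0 : EuclideanSpace ℝ (Fin N)) 1)).toReal * φ 1 ^ 2 =
      2 * mu2 N / (mu2 N - (N : ℝ) + 1) := by
  obtain ⟨n, rfl⟩ : ∃ n, N = n + 1 := ⟨N - 1, by omega⟩
  set μ := mu2 (n + 1)
  set V := (volume (ball (0 : EuclideanSpace ℝ (Fin (n + 1))) 1)).toReal
  simp only [Nat.cast_add, Nat.cast_one, add_sub_cancel_right, Nat.add_sub_cancel] at hode hnorm ⊢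
  have hV : 0 < V := ENNReal.toReal_pos (measure_ball_pos volume 0 one_pos).ne'
    measure_ball_lt_top.ne
  have key := (IsRegularRadialSolution.mk hd1 hd2 hcont hode h0).sub_mul_sq_one_eq_integral h1
  rw [hnorm, mul_one_div, eq_div_iff hV.ne'] at key
  have hμn : μ - n ≠ 0 := by
    intro hμ
    have hn : (n : ℝ) = 0 := by linear_combination (φ 1 ^ 2 * V / 2 - 1) * hμ - key / 2
    have : n = 0 := by exact_mod_cast hn
    omega
  rw [show μ - (n + 1) + 1 = μ - n by ring, eq_div_iff hμn]
  linear_combination key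
end

section
/- Let G : [0,∞) → R be nondecreasing with G(t) > 0 for t > 0, and let x̃ ∈ R^N \ {0}. Then ∫_B G(|x + x̃|) ((x + x̃)/|x + x̃|) · x̃ dx > 0, where B is the unit ball in R^N. -/
/-!
Let `σ` be the reflection in the hyperplane `c^⊥` and `F v = G(|v|) ⟪v / |v|, c⟫`. As `σ` preserves
the ball and Lebesgue measure, the integral of `F (x + c)` is half that of
`F (x + c) + F (σ x + c)`. When `⟪x, c⟫ ≥ 0` we have `|σ x + c| ≤ |x + c|` and
`|⟪(σ x + c) / |σ x + c|, c⟫| ≤ ⟪(x + c) / |x + c|, c⟫`, so, `G` being nondecreasing and positive,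
this symmetrized integrand is nonnegative everywhere; it is positive on the ball `|x| < |c|`, where
both `⟪x + c, c⟫` and `⟪σ x + c, c⟫` are positive.
-/

open MeasureTheory Metric Set Submodule
open scoped RealInnerProductSpace

theorem setIntegral_pos_of_nonneg_of_pos_on_open {X : Type*} [TopologicalSpace X]
    [MeasurableSpace X] {μ : Measure X} [μ.IsOpenPosMeasure] {f : X → ℝ} {s U : Set X}
    (hs : MeasurableSet s) (hf : IntegrableOn f s μ) (hnonneg : ∀ x ∈ s, 0 ≤ f x)
    (hU : IsOpen U) (hUne : U.Nonempty) (hUs : U ⊆ s) (hpos : ∀ x ∈ U, 0 < f x) :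
    0 < ∫ x in s, f x ∂μ := by
  rw [setIntegral_pos_iff_support_of_nonneg_ae (ae_restrict_of_forall_mem hs hnonneg) hf]
  exact (hU.measure_pos μ hUne).trans_le (measure_mono fun x hx => ⟨(hpos x hx).ne', hUs hx⟩)

variable {E : Type*} [NormedAddCommGroup E] [InnerProductSpace ℝ E]

/-- The component along `c` of the radial field `G(|v|) v / |v|`; it is `0` at `v = 0`, whatever
`G 0` is, because `0⁻¹ = 0`. -/
noncomputable def radialFieldInner (G : ℝ → ℝ) (c v : E) : ℝ := G ‖v‖ * ⟪‖v‖⁻¹ • v, c⟫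

section Reflection

variable (c : E) {x : E}

theorem inner_reflection_orthogonal_span_singleton (x : E) :
    ⟪reflection (ℝ ∙ c)ᗮ x, c⟫ = -⟪x, c⟫ := by
  have h : reflection (ℝ ∙ c)ᗮ (-c) = c := by
    rw [map_neg, reflection_orthogonalComplement_singleton_eq_neg, neg_neg]
  calc ⟪reflection (ℝ ∙ c)ᗮ x, c⟫ = ⟪reflection (ℝ ∙ c)ᗮ x, reflection (ℝ ∙ c)ᗮ (-c)⟫ := by rw [h]
    _ = -⟪x, c⟫ := by rw [LinearIsometryEquiv.inner_map_map, inner_neg_right]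

theorem norm_reflection_orthogonal_span_singleton_add_sq (x : E) :
    ‖reflection (ℝ ∙ c)ᗮ x + c‖ ^ 2 = ‖x‖ ^ 2 - 2 * ⟪x, c⟫ + ‖c‖ ^ 2 := by
  rw [norm_add_sq_real, LinearIsometryEquiv.norm_map, inner_reflection_orthogonal_span_singleton]
  ring

theorem norm_reflection_orthogonal_span_singleton_add_le (hx : 0 ≤ ⟪x, c⟫) :
    ‖reflection (ℝ ∙ c)ᗮ x + c‖ ≤ ‖x + c‖ := by
  refine (sq_le_sq₀ (norm_nonneg _) (norm_nonneg _)).1 ?_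
  rw [norm_reflection_orthogonal_span_singleton_add_sq, norm_add_sq_real]
  linarith

theorem abs_inner_unit_reflection_orthogonal_span_singleton_add_le (hx : 0 ≤ ⟪x, c⟫) :
    |⟪‖reflection (ℝ ∙ c)ᗮ x + c‖⁻¹ • (reflection (ℝ ∙ c)ᗮ x + c), c⟫|
      ≤ ⟪‖x + c‖⁻¹ • (x + c), c⟫ := by
  set s := ‖reflection (ℝ ∙ c)ᗮ x + c‖
  set r := ‖x + c‖
  have hs2 : s ^ 2 = ‖x‖ ^ 2 - 2 * ⟪x, c⟫ + ‖c‖ ^ 2 :=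
    norm_reflection_orthogonal_span_singleton_add_sq c x
  have hr2 : r ^ 2 = ‖x‖ ^ 2 + 2 * ⟪x, c⟫ + ‖c‖ ^ 2 := norm_add_sq_real x c
  have hsr : s ≤ r := norm_reflection_orthogonal_span_singleton_add_le c hx
  have hs0 : 0 ≤ s := norm_nonneg _
  have hcs : ⟪x, c⟫ ^ 2 ≤ ‖x‖ ^ 2 * ‖c‖ ^ 2 := by
    rw [← mul_pow, ← sq_abs]
    exact pow_le_pow_left₀ (abs_nonneg _) (abs_real_inner_le_norm x c) 2
  simp only [real_inner_smul_left, inner_add_left, inner_reflection_orthogonal_span_singleton,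
    real_inner_self_eq_norm_sq, abs_mul, abs_inv, abs_of_nonneg hs0]
  rcases hs0.eq_or_lt with hs | hs
  · rw [← hs, inv_zero, zero_mul]
    positivity
  rw [inv_mul_eq_div, inv_mul_eq_div, div_le_div_iff₀ hs (hs.trans_le hsr),
    ← pow_le_pow_iff_left₀ (by positivity) (by positivity) two_ne_zero, mul_pow, mul_pow, sq_abs,
    hr2, hs2]
  -- squared, the claim is Cauchy–Schwarz: `4⟪x, c⟫ (‖x‖²‖c‖² - ⟪x, c⟫²) ≥ 0`
  linear_combination 4 * mul_nonneg hx (sub_nonneg.2 hcs)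

end Reflection

section RadialField

variable {G : ℝ → ℝ} {c : E}

theorem abs_radialFieldInner_le (v : E) : |radialFieldInner G c v| ≤ |G ‖v‖| * ‖c‖ := by
  rw [radialFieldInner, abs_mul]
  gcongr
  refine (abs_real_inner_le_norm _ _).trans (mul_le_of_le_one_left (norm_nonneg c) ?_)
  rw [norm_smul, norm_inv, norm_norm]
  exact inv_mul_le_one

theorem radialFieldInner_add_nonneg (hG : MonotoneOn G (Ici 0)) (hGpos : ∀ t, 0 < t → 0 < G t)
    {u v : E} (hnorm : ‖v‖ ≤ ‖u‖) (hinner : |⟪‖v‖⁻¹ • v, c⟫| ≤ ⟪‖u‖⁻¹ • u, c⟫) :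
    0 ≤ radialFieldInner G c u + radialFieldInner G c v := by
  have hu : 0 ≤ ⟪‖u‖⁻¹ • u, c⟫ := (abs_nonneg _).trans hinner
  rcases eq_or_ne v 0 with rfl | hv
  · rcases eq_or_ne u 0 with rfl | hu0
    · simp [radialFieldInner]
    simpa [radialFieldInner] using mul_nonneg (hGpos _ (norm_pos_iff.2 hu0)).le hu
  have hv : 0 < ‖v‖ := norm_pos_iff.2 hv
  have hGvu : G ‖v‖ ≤ G ‖u‖ := hG (mem_Ici.2 hv.le) (mem_Ici.2 (hv.le.trans hnorm)) hnorm
  calc 0 ≤ G ‖v‖ * (⟪‖u‖⁻¹ • u, c⟫ + ⟪‖v‖⁻¹ • v, c⟫) :=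
        mul_nonneg (hGpos _ hv).le (by linarith [neg_abs_le ⟪‖v‖⁻¹ • v, c⟫])
    _ ≤ radialFieldInner G c u + radialFieldInner G c v := by
        rw [mul_add, radialFieldInner, radialFieldInner]; gcongr

theorem radialFieldInner_add_reflection_add_nonneg (hG : MonotoneOn G (Ici 0))
    (hGpos : ∀ t, 0 < t → 0 < G t) (x : E) :
    0 ≤ radialFieldInner G c (x + c) + radialFieldInner G c (reflection (ℝ ∙ c)ᗮ x + c) := by
  rcases le_total 0 ⟪x, c⟫ with hx | hx
  · exact radialFieldInner_add_nonneg hG hGpos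
      (norm_reflection_orthogonal_span_singleton_add_le c hx)
      (abs_inner_unit_reflection_orthogonal_span_singleton_add_le c hx)
  have hσx : 0 ≤ ⟪reflection (ℝ ∙ c)ᗮ x, c⟫ := by
    rw [inner_reflection_orthogonal_span_singleton]; linarith
  have h := radialFieldInner_add_nonneg hG hGpos
    (norm_reflection_orthogonal_span_singleton_add_le c hσx)
    (abs_inner_unit_reflection_orthogonal_span_singleton_add_le c hσx)
  rwa [reflection_reflection, add_comm] at h

theorem radialFieldInner_add_pos_of_norm_lt (hGpos : ∀ t, 0 < t → 0 < G t) {x : E}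
    (hx : ‖x‖ < ‖c‖) : 0 < radialFieldInner G c (x + c) := by
  have hinner : 0 < ⟪x + c, c⟫ := by
    rw [inner_add_left, real_inner_self_eq_norm_sq]
    nlinarith [neg_abs_le ⟪x, c⟫, abs_real_inner_le_norm x c, norm_nonneg x]
  have hxc : 0 < ‖x + c‖ := norm_pos_iff.2 fun h => by simp [h] at hinner
  rw [radialFieldInner, real_inner_smul_left]
  exact mul_pos (hGpos _ hxc) (mul_pos (inv_pos.2 hxc) hinner)

variable [FiniteDimensional ℝ E] [MeasurableSpace E] [BorelSpace E]

theorem measurable_radialFieldInner (hG : MonotoneOn G (Ici 0)) :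
    Measurable (radialFieldInner G c) := by
  have hGmax : Monotone fun t => G (max t 0) := fun t u htu =>
    hG (mem_Ici.2 (le_max_right _ _)) (mem_Ici.2 (le_max_right _ _)) (max_le_max htu le_rfl)
  have h : radialFieldInner G c = fun v => G (max ‖v‖ 0) * (‖v‖⁻¹ * ⟪v, c⟫) := by
    ext v; rw [radialFieldInner, max_eq_left (norm_nonneg v), real_inner_smul_left]
  rw [h]
  exact (hGmax.measurable.comp (by fun_prop)).mul (by fun_prop)

theorem integrableOn_ball_radialFieldInner_add (hG : MonotoneOn G (Ici 0)) (μ : Measure E)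
    [IsFiniteMeasureOnCompacts μ] (R : ℝ) :
    IntegrableOn (fun x => radialFieldInner G c (x + c)) (ball 0 R) μ := by
  refine Measure.integrableOn_of_bounded (M := max |G 0| |G (R + ‖c‖)| * ‖c‖)
    measure_ball_lt_top.ne
    ((measurable_radialFieldInner hG).comp (measurable_add_const c)).aestronglyMeasurable
    ((ae_restrict_iff' measurableSet_ball).2 (ae_of_all _ fun x hx => ?_))
  have hxc : ‖x + c‖ ≤ R + ‖c‖ :=
    (norm_add_le x c).trans (by linarith [mem_ball_zero_iff.1 hx])
  refine (abs_radialFieldInner_le _).trans (mul_le_mul_of_nonneg_right ?_ (norm_nonneg c))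
  exact abs_le_max_abs_abs (hG (mem_Ici.2 le_rfl) (mem_Ici.2 (norm_nonneg _)) (norm_nonneg _))
    (hG (mem_Ici.2 (norm_nonneg _)) (mem_Ici.2 ((norm_nonneg _).trans hxc)) hxc)

theorem setIntegral_ball_radialFieldInner_add_pos (hG : MonotoneOn G (Ici 0))
    (hGpos : ∀ t, 0 < t → 0 < G t) (hc : c ≠ 0) {R : ℝ} (hR : 0 < R) :
    0 < ∫ x in ball 0 R, radialFieldInner G c (x + c) := by
  set σ := reflection (ℝ ∙ c)ᗮ
  set f := fun x => radialFieldInner G c (x + c)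
  have hball : σ ⁻¹' ball 0 R = ball 0 R := by rw [σ.preimage_ball, map_zero]
  have hf : IntegrableOn f (ball 0 R) := integrableOn_ball_radialFieldInner_add hG volume R
  have hfσ : IntegrableOn (fun x => f (σ x)) (ball 0 R) := by
    rw [← hball]
    exact (σ.measurePreserving.integrableOn_comp_preimage σ.toHomeomorph.measurableEmbedding).2 hf
  have hsym : ∫ x in ball 0 R, f (σ x) = ∫ x in ball 0 R, f x := by
    conv_lhs => rw [← hball]
    exact σ.measurePreserving.setIntegral_preimage_emb σ.toHomeomorph.measurableEmbedding f _
  have hpos : 0 < ∫ x in ball 0 R, (f x + f (σ x)) := by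
    refine setIntegral_pos_of_nonneg_of_pos_on_open measurableSet_ball (hf.add hfσ)
      (fun x _ => radialFieldInner_add_reflection_add_nonneg hG hGpos x) isOpen_ball
      ⟨0, mem_ball_self (lt_min hR (norm_pos_iff.2 hc))⟩ (ball_subset_ball (min_le_left _ _))
      fun x hx => ?_
    have hx : ‖x‖ < ‖c‖ := (mem_ball_zero_iff.1 hx).trans_le (min_le_right _ _)
    exact add_pos (radialFieldInner_add_pos_of_norm_lt hGpos hx)
      (radialFieldInner_add_pos_of_norm_lt hGpos (by rwa [σ.norm_map]))
  rw [integral_add hf hfσ, hsym] at hpos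
  linarith

end RadialField

theorem integral_shifted_radial_pos_general (N : ℕ) (G : ℝ → ℝ)
    (hG : MonotoneOn G (Ici 0)) (hGpos : ∀ t : ℝ, 0 < t → 0 < G t)
    (c : EuclideanSpace ℝ (Fin N)) (hc : c ≠ 0) :
    0 < ∫ x in ball (0 : EuclideanSpace ℝ (Fin N)) 1,
        G ‖x + c‖ * (inner ℝ ((‖x + c‖)⁻¹ • (x + c)) c : ℝ) :=
  setIntegral_ball_radialFieldInner_add_pos hG hGpos hc one_pos

/-- Let `G : [0,∞) → ℝ` be nondecreasing with `G(t) > 0` for `t > 0`, and let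
`x̃ ∈ ℝ^N \ {0}`. Then `∫_B G(|x + x̃|) ((x + x̃)/|x + x̃|) · x̃ dx > 0`, where `B` is
the unit ball in `ℝ^N`. -/
theorem integral_shifted_radial_pos (N : ℕ) (hN : 2 ≤ N) (G : ℝ → ℝ)
    (hG : MonotoneOn G (Ici 0)) (hGpos : ∀ t : ℝ, 0 < t → 0 < G t)
    (c : EuclideanSpace ℝ (Fin N)) (hc : c ≠ 0) :
    0 < ∫ x in ball (0 : EuclideanSpace ℝ (Fin N)) 1,
        G ‖x + c‖ * (inner ℝ ((‖x + c‖)⁻¹ • (x + c)) c : ℝ) :=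
  integral_shifted_radial_pos_general N G hG hGpos c hc
end
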